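/- Let I = [α, β] be a compact interval in ℝ with α < β, let Q and R be real polynomials, and let ε > 0. Then there exists a linear game (a polynomial game in which every payoff entry is a polynomial of degree at most 1 in Z) whose value function agrees with z ↦ Q(z)/max{R(z), ε} on I. -/

import Mathlib

open Polynomial

/-- The value of a finite two-player zero-sum matrix game with payoff matrix `G`:
`sup` over mixed strategies of Player 1 of `inf` over mixed strategies of Player 2
of the expected payoff. -/
noncomputable def matrixValue {A B : Type} [Fintype A] [Fintype B] (G : A → B → ℝ) : ℝ :=
  ⨆ x : stdSimplex ℝ A, ⨅ y : stdSimplex ℝ B, ∑ a : A, ∑ b : B, x.1 a * G a b * y.1 b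

/-!
Values of linear games, as functions of `z`, form a class closed under negation (swap the
players), sums (play both games at once), `min` (Player 2 also chooses which game counts),
nonnegative scaling, and block-diagonal combination: for values `u, w ≥ 0` the block-diagonal game
has value `u w / (u + w)`, which yields `f⁻¹` whenever `f` is bounded below by a positive constant.
Since `t (t + 1) = (t⁻¹ - (t + 1)⁻¹)⁻¹`, bounded members can be squared, hence multiplied; on a
bounded set the class therefore contains every polynomial, `max (R z) ε`, its reciprocal and
`Q z / max (R z) ε`. Each step is certified by explicit optimal strategies of both players.
-/

open Matrix Set Bornology

section Strategies

variable {A B C : Type*} [Fintype A] [Fintype B]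

lemma Sum.elim_mem_stdSimplex_iff {x : A → ℝ} {y : B → ℝ} :
    Sum.elim x y ∈ stdSimplex ℝ (A ⊕ B) ↔ (0 ≤ x ∧ 0 ≤ y) ∧ ∑ a, x a + ∑ b, y b = 1 := by
  simp [stdSimplex, Fintype.sum_sum_type, Sum.forall, Pi.le_def]

lemma mul_mem_stdSimplex_prod {x : A → ℝ} {y : B → ℝ} (hx : x ∈ stdSimplex ℝ A)
    (hy : y ∈ stdSimplex ℝ B) : (fun p : A × B => x p.1 * y p.2) ∈ stdSimplex ℝ (A × B) :=
  ⟨fun p => mul_nonneg (hx.1 _) (hy.1 _), by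
    rw [Fintype.sum_prod_type, ← Finset.sum_mul_sum, hx.2, hy.2, one_mul]⟩

lemma vecMul_submatrix_fst {x : A → ℝ} {y : B → ℝ} (hy : ∑ b, y b = 1) (G : Matrix A C ℝ) :
    (fun p : A × B => x p.1 * y p.2) ᵥ* G.submatrix Prod.fst id = x ᵥ* G := by
  ext c
  simp only [vecMul, dotProduct, Fintype.sum_prod_type, submatrix_apply, id]
  refine Finset.sum_congr rfl fun a _ => ?_
  rw [← Finset.sum_mul, ← Finset.mul_sum, hy, mul_one]

lemma vecMul_submatrix_snd {x : A → ℝ} {y : B → ℝ} (hx : ∑ a, x a = 1) (G : Matrix B C ℝ) :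
    (fun p : A × B => x p.1 * y p.2) ᵥ* G.submatrix Prod.snd id = y ᵥ* G := by
  ext c
  simp only [vecMul, dotProduct, Fintype.sum_prod_type, submatrix_apply, id]
  rw [Finset.sum_comm]
  refine Finset.sum_congr rfl fun b _ => ?_
  rw [← Finset.sum_mul, ← Finset.sum_mul, hx, one_mul]

lemma dotProduct_le_of_mem_stdSimplex {x : A → ℝ} (hx : x ∈ stdSimplex ℝ A) {f : A → ℝ}
    {v : ℝ} (hf : ∀ a, f a ≤ v) : x ⬝ᵥ f ≤ v :=
  calc x ⬝ᵥ f ≤ ∑ a, x a * v :=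
        Finset.sum_le_sum fun a _ => mul_le_mul_of_nonneg_left (hf a) (hx.1 a)
    _ = v := by rw [← Finset.sum_mul, hx.2, one_mul]

lemma le_dotProduct_of_mem_stdSimplex {x : A → ℝ} (hx : x ∈ stdSimplex ℝ A) {f : A → ℝ}
    {v : ℝ} (hf : ∀ a, v ≤ f a) : v ≤ x ⬝ᵥ f :=
  calc v = ∑ a, x a * v := by rw [← Finset.sum_mul, hx.2, one_mul]
    _ ≤ x ⬝ᵥ f := Finset.sum_le_sum fun a _ => mul_le_mul_of_nonneg_left (hf a) (hx.1 a)

end Strategies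

section Games

variable {A B A₁ A₂ B₁ B₂ R : Type*}

def sumGame [Add R] (G₁ : Matrix A₁ B₁ R) (G₂ : Matrix A₂ B₂ R) :
    Matrix (A₁ × A₂) (B₁ × B₂) R :=
  G₁.submatrix Prod.fst Prod.fst + G₂.submatrix Prod.snd Prod.snd

def minGame (G₁ : Matrix A₁ B₁ R) (G₂ : Matrix A₂ B₂ R) : Matrix (A₁ × A₂) (B₁ ⊕ B₂) R :=
  fromCols (G₁.submatrix Prod.fst id) (G₂.submatrix Prod.snd id)

lemma neg_transpose_sumGame [SubtractionCommMonoid R] (G₁ : Matrix A₁ B₁ R)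
    (G₂ : Matrix A₂ B₂ R) : -(sumGame G₁ G₂)ᵀ = sumGame (-G₁ᵀ) (-G₂ᵀ) := by
  ext b a
  simp [sumGame, add_comm]

lemma neg_transpose_minGame [Neg R] (G₁ : Matrix A₁ B₁ R) (G₂ : Matrix A₂ B₂ R) :
    -(minGame G₁ G₂)ᵀ = fromRows ((-G₁ᵀ).submatrix id Prod.fst) ((-G₂ᵀ).submatrix id Prod.snd) := by
  ext (b | b) a <;> rfl

variable [Fintype A] [Fintype A₁] [Fintype A₂]

def CanSecure (G : Matrix A B ℝ) (v : ℝ) : Prop :=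
  ∃ x ∈ stdSimplex ℝ A, ∀ b, v ≤ (x ᵥ* G) b

/-- `v` is the value of `G`, certified by optimal strategies of both players: Player 2 of `G`
is Player 1 of `-Gᵀ`. -/
def IsSaddleValue [Fintype B] (G : Matrix A B ℝ) (v : ℝ) : Prop :=
  CanSecure G v ∧ CanSecure (-Gᵀ) (-v)

namespace CanSecure

variable {G : Matrix A B ℝ} {G₁ : Matrix A₁ B₁ ℝ} {G₂ : Matrix A₂ B₂ ℝ} {v v₁ v₂ : ℝ}

lemma smul (h : CanSecure G v) {c : ℝ} (hc : 0 ≤ c) : CanSecure (c • G) (c * v) :=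
  let ⟨x, hx, hxG⟩ := h
  ⟨x, hx, fun b => by rw [vecMul_smul]; exact mul_le_mul_of_nonneg_left (hxG b) hc⟩

lemma submatrix_id {B' : Type*} (h : CanSecure G v) (f : B' → B) :
    CanSecure (G.submatrix id f) v :=
  let ⟨x, hx, hxG⟩ := h
  ⟨x, hx, fun b => hxG (f b)⟩

lemma fromRows_left {G₁ : Matrix A₁ B ℝ} (h : CanSecure G₁ v) (G₂ : Matrix A₂ B ℝ) :
    CanSecure (fromRows G₁ G₂) v := by
  obtain ⟨x, hx, hxG⟩ := h
  refine ⟨Sum.elim x 0, Sum.elim_mem_stdSimplex_iff.2 ⟨⟨hx.1, le_rfl⟩, by simp [hx.2]⟩,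
    fun b => ?_⟩
  simpa [vecMul_fromRows] using hxG b

lemma fromRows_right {G₂ : Matrix A₂ B ℝ} (h : CanSecure G₂ v) (G₁ : Matrix A₁ B ℝ) :
    CanSecure (fromRows G₁ G₂) v := by
  obtain ⟨x, hx, hxG⟩ := h
  refine ⟨Sum.elim 0 x, Sum.elim_mem_stdSimplex_iff.2 ⟨⟨le_rfl, hx.1⟩, by simp [hx.2]⟩,
    fun b => ?_⟩
  simpa [vecMul_fromRows] using hxG b

lemma exists_prod (h₁ : CanSecure G₁ v₁) (h₂ : CanSecure G₂ v₂) :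
    ∃ x ∈ stdSimplex ℝ (A₁ × A₂), (∀ b, v₁ ≤ (x ᵥ* G₁.submatrix Prod.fst id) b) ∧
      ∀ b, v₂ ≤ (x ᵥ* G₂.submatrix Prod.snd id) b := by
  obtain ⟨x₁, hx₁, hxG₁⟩ := h₁
  obtain ⟨x₂, hx₂, hxG₂⟩ := h₂
  refine ⟨_, mul_mem_stdSimplex_prod hx₁ hx₂, ?_, ?_⟩
  · rwa [vecMul_submatrix_fst hx₂.2]
  · rwa [vecMul_submatrix_snd hx₁.2]

lemma sumGame (h₁ : CanSecure G₁ v₁) (h₂ : CanSecure G₂ v₂) :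
    CanSecure (sumGame G₁ G₂) (v₁ + v₂) :=
  let ⟨x, hx, hxG₁, hxG₂⟩ := h₁.exists_prod h₂
  ⟨x, hx, fun b => by
    rw [_root_.sumGame, vecMul_add]; exact add_le_add (hxG₁ b.1) (hxG₂ b.2)⟩

lemma minGame (h₁ : CanSecure G₁ v₁) (h₂ : CanSecure G₂ v₂) :
    CanSecure (minGame G₁ G₂) (min v₁ v₂) := by
  obtain ⟨x, hx, hxG₁, hxG₂⟩ := h₁.exists_prod h₂
  refine ⟨x, hx, ?_⟩
  rintro (b | b)
  · simpa [_root_.minGame, vecMul_fromCols] using min_le_of_left_le (hxG₁ b)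
  · simpa [_root_.minGame, vecMul_fromCols] using min_le_of_right_le (hxG₂ b)

lemma fromBlocks [Fintype B₁] [Fintype B₂] (h₁ : CanSecure G₁ v₁) (h₂ : CanSecure G₂ v₂)
    {θ : ℝ} (hθ : θ ∈ Icc 0 1) (hθv : θ * v₁ = (1 - θ) * v₂) :
    CanSecure (fromBlocks G₁ 0 0 G₂) (θ * v₁) := by
  obtain ⟨x₁, hx₁, hxG₁⟩ := h₁
  obtain ⟨x₂, hx₂, hxG₂⟩ := h₂
  have hθ' : 0 ≤ 1 - θ := sub_nonneg.2 hθ.2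
  refine ⟨Sum.elim (θ • x₁) ((1 - θ) • x₂), Sum.elim_mem_stdSimplex_iff.2
    ⟨⟨smul_nonneg hθ.1 hx₁.1, smul_nonneg hθ' hx₂.1⟩, ?_⟩, ?_⟩
  · simp [← Finset.mul_sum, hx₁.2, hx₂.2]
  rintro (b | b)
  · simpa [vecMul_fromBlocks, smul_vecMul] using mul_le_mul_of_nonneg_left (hxG₁ b) hθ.1
  · simpa [vecMul_fromBlocks, smul_vecMul, hθv] using mul_le_mul_of_nonneg_left (hxG₂ b) hθ'

end CanSecure

end Games

section Saddle

variable {A B A₁ A₂ B₁ B₂ : Type*} [Fintype A] [Fintype B] [Fintype A₁] [Fintype A₂]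
  [Fintype B₁] [Fintype B₂]

lemma isSaddleValue_const (c : ℝ) : IsSaddleValue (of fun (_ _ : Unit) => c) c :=
  ⟨⟨1, by simp [stdSimplex], fun _ => by simp [vecMul]⟩,
    ⟨1, by simp [stdSimplex], fun _ => by simp [vecMul]⟩⟩

namespace IsSaddleValue

variable {G : Matrix A B ℝ} {G₁ : Matrix A₁ B₁ ℝ} {G₂ : Matrix A₂ B₂ ℝ} {v v₁ v₂ : ℝ}

lemma neg (h : IsSaddleValue G v) : IsSaddleValue (-Gᵀ) (-v) :=
  ⟨h.2, by simpa using h.1⟩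

lemma smul (h : IsSaddleValue G v) {c : ℝ} (hc : 0 ≤ c) : IsSaddleValue (c • G) (c * v) :=
  ⟨h.1.smul hc, by simpa [transpose_smul, ← smul_neg, ← mul_neg] using h.2.smul hc⟩

lemma sumGame (h₁ : IsSaddleValue G₁ v₁) (h₂ : IsSaddleValue G₂ v₂) :
    IsSaddleValue (sumGame G₁ G₂) (v₁ + v₂) :=
  ⟨h₁.1.sumGame h₂.1, by rw [neg_transpose_sumGame, neg_add]; exact h₁.2.sumGame h₂.2⟩

lemma minGame (h₁ : IsSaddleValue G₁ v₁) (h₂ : IsSaddleValue G₂ v₂) :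
    IsSaddleValue (minGame G₁ G₂) (min v₁ v₂) := by
  refine ⟨h₁.1.minGame h₂.1, ?_⟩
  rw [neg_transpose_minGame]
  rcases le_total v₁ v₂ with h | h
  · rw [min_eq_left h]; exact (h₁.2.submatrix_id _).fromRows_left _
  · rw [min_eq_right h]; exact (h₂.2.submatrix_id _).fromRows_right _

lemma fromBlocks (h₁ : IsSaddleValue G₁ v₁) (h₂ : IsSaddleValue G₂ v₂) {θ : ℝ}
    (hθ : θ ∈ Icc 0 1) (hθv : θ * v₁ = (1 - θ) * v₂) :
    IsSaddleValue (fromBlocks G₁ 0 0 G₂) (θ * v₁) := by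
  refine ⟨h₁.1.fromBlocks h₂.1 hθ hθv, ?_⟩
  simp only [fromBlocks_transpose, fromBlocks_neg, transpose_zero, neg_zero, ← mul_neg]
  exact h₁.2.fromBlocks h₂.2 hθ (by rw [mul_neg, mul_neg, hθv])

end IsSaddleValue

lemma IsSaddleValue.matrixValue_eq {A B : Type} [Fintype A] [Fintype B] {G : Matrix A B ℝ}
    {v : ℝ} (h : IsSaddleValue G v) : matrixValue G = v := by
  obtain ⟨⟨x, hx, hxG⟩, ⟨y, hy, hyG⟩⟩ := h
  have : Nonempty (stdSimplex ℝ A) := ⟨⟨x, hx⟩⟩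
  have : Nonempty (stdSimplex ℝ B) := ⟨⟨y, hy⟩⟩
  have payoff_eq (x' : A → ℝ) (y' : B → ℝ) :
      ∑ a, ∑ b, x' a * G a b * y' b = y' ⬝ᵥ (x' ᵥ* G) := by
    simp only [dotProduct, vecMul, Finset.mul_sum]
    rw [Finset.sum_comm]
    exact Finset.sum_congr rfl fun _ _ => Finset.sum_congr rfl fun _ _ => by ring
  have inf_le (x' : stdSimplex ℝ A) :
      ⨅ y' : stdSimplex ℝ B, ∑ a, ∑ b, x'.1 a * G a b * y'.1 b ≤ v := by
    have hbdd : BddBelow (range fun y' : stdSimplex ℝ B => ∑ a, ∑ b, x'.1 a * G a b * y'.1 b) :=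
      (isCompact_range (continuous_finsetSum _ fun a _ => continuous_finsetSum _ fun b _ =>
        continuous_const.mul ((continuous_apply b).comp continuous_subtype_val))).bddBelow
    refine (ciInf_le hbdd ⟨y, hy⟩).trans ?_
    rw [payoff_eq, dotProduct_comm, ← dotProduct_mulVec]
    refine dotProduct_le_of_mem_stdSimplex x'.2 fun a => ?_
    simpa [vecMul_neg, vecMul_transpose] using hyG a
  refine le_antisymm (ciSup_le inf_le) ?_
  refine le_trans ?_ (le_ciSup ⟨v, forall_mem_range.2 inf_le⟩ ⟨x, hx⟩)
  exact le_ciInf fun y' => by rw [payoff_eq]; exact le_dotProduct_of_mem_stdSimplex y'.2 hxG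

end Saddle

/-- Entries are affine maps `ℝ →ᵃ[ℝ] ℝ`, i.e. polynomials of degree at most one in `Z`; unlike
`Polynomial.eval`, evaluating them commutes definitionally with the constructions of games. -/
def IsLinearGameValueOn (I : Set ℝ) (f : ℝ → ℝ) : Prop :=
  ∃ (A B : Type) (_ : Fintype A) (_ : Fintype B) (_ : Nonempty A) (_ : Nonempty B)
    (G : Matrix A B (ℝ →ᵃ[ℝ] ℝ)), ∀ z ∈ I, IsSaddleValue (G.map (· z)) (f z)

lemma isLinearGameValueOn_affineMap (I : Set ℝ) (f : ℝ →ᵃ[ℝ] ℝ) :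
    IsLinearGameValueOn I f :=
  ⟨Unit, Unit, _, _, inferInstance, inferInstance, of fun _ _ => f,
    fun z _ => isSaddleValue_const (f z)⟩

lemma isLinearGameValueOn_const (I : Set ℝ) (c : ℝ) : IsLinearGameValueOn I fun _ => c :=
  isLinearGameValueOn_affineMap I (AffineMap.const ℝ ℝ c)

lemma isLinearGameValueOn_id (I : Set ℝ) : IsLinearGameValueOn I id :=
  isLinearGameValueOn_affineMap I (AffineMap.id ℝ ℝ)

namespace IsLinearGameValueOn

variable {I : Set ℝ} {f g : ℝ → ℝ}

lemma congr (h : IsLinearGameValueOn I f) (hfg : EqOn f g I) : IsLinearGameValueOn I g :=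
  let ⟨A, B, _, _, _, _, G, hG⟩ := h
  ⟨A, B, _, _, inferInstance, inferInstance, G, fun z hz => hfg hz ▸ hG z hz⟩

lemma neg (h : IsLinearGameValueOn I f) : IsLinearGameValueOn I (-f) :=
  let ⟨A, B, _, _, _, _, G, hG⟩ := h
  ⟨B, A, _, _, inferInstance, inferInstance, -Gᵀ, fun z hz => (hG z hz).neg⟩

lemma add (hf : IsLinearGameValueOn I f) (hg : IsLinearGameValueOn I g) :
    IsLinearGameValueOn I (f + g) :=
  let ⟨A₁, B₁, _, _, _, _, G₁, hG₁⟩ := hf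
  let ⟨A₂, B₂, _, _, _, _, G₂, hG₂⟩ := hg
  ⟨A₁ × A₂, B₁ × B₂, _, _, inferInstance, inferInstance, sumGame G₁ G₂,
    fun z hz => (hG₁ z hz).sumGame (hG₂ z hz)⟩

lemma sub (hf : IsLinearGameValueOn I f) (hg : IsLinearGameValueOn I g) :
    IsLinearGameValueOn I (f - g) :=
  (hf.add hg.neg).congr fun z _ => (sub_eq_add_neg (f z) (g z)).symm

lemma min (hf : IsLinearGameValueOn I f) (hg : IsLinearGameValueOn I g) :
    IsLinearGameValueOn I fun z => min (f z) (g z) :=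
  let ⟨A₁, B₁, _, _, _, _, G₁, hG₁⟩ := hf
  let ⟨A₂, B₂, _, _, _, _, G₂, hG₂⟩ := hg
  ⟨A₁ × A₂, B₁ ⊕ B₂, _, _, inferInstance, inferInstance, minGame G₁ G₂, fun z hz => by
    rw [minGame, fromCols_map]; exact (hG₁ z hz).minGame (hG₂ z hz)⟩

lemma max (hf : IsLinearGameValueOn I f) (hg : IsLinearGameValueOn I g) :
    IsLinearGameValueOn I fun z => max (f z) (g z) :=
  (hf.neg.min hg.neg).neg.congr fun z _ => by simp [min_neg_neg]

lemma smul_of_nonneg (h : IsLinearGameValueOn I f) {c : ℝ} (hc : 0 ≤ c) :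
    IsLinearGameValueOn I (c • f) :=
  let ⟨A, B, _, _, _, _, G, hG⟩ := h
  ⟨A, B, _, _, inferInstance, inferInstance, c • G, fun z hz => (hG z hz).smul hc⟩

lemma smul (h : IsLinearGameValueOn I f) (c : ℝ) : IsLinearGameValueOn I (c • f) := by
  rcases le_total 0 c with hc | hc
  · exact h.smul_of_nonneg hc
  · exact (h.smul_of_nonneg (neg_nonneg.2 hc)).neg.congr fun z _ => by simp

lemma fromBlocks (hf : IsLinearGameValueOn I f) (hg : IsLinearGameValueOn I g) {θ : ℝ → ℝ}
    (hθ : ∀ z ∈ I, θ z ∈ Icc 0 1) (hθfg : ∀ z ∈ I, θ z * f z = (1 - θ z) * g z) :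
    IsLinearGameValueOn I (θ * f) :=
  let ⟨A₁, B₁, _, _, _, _, G₁, hG₁⟩ := hf
  let ⟨A₂, B₂, _, _, _, _, G₂, hG₂⟩ := hg
  ⟨A₁ ⊕ A₂, B₁ ⊕ B₂, _, _, inferInstance, inferInstance, Matrix.fromBlocks G₁ 0 0 G₂,
    fun z hz => by
      rw [fromBlocks_map]; exact (hG₁ z hz).fromBlocks (hG₂ z hz) (hθ z hz) (hθfg z hz)⟩

lemma inv_of_le (h : IsLinearGameValueOn I f) {c : ℝ} (hc : 0 < c) (hcf : ∀ z ∈ I, c ≤ f z) :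
    IsLinearGameValueOn I f⁻¹ := by
  have hf₀ : ∀ z ∈ I, f z ≠ 0 := fun z hz => (hc.trans_le (hcf z hz)).ne'
  -- the block-diagonal game of `f - c` and `c` has value `c (f - c) / f = c - c² / f`
  have hθ : ∀ z ∈ I, c / f z ∈ Icc 0 1 := fun z hz =>
    have hfz := hc.le.trans (hcf z hz)
    ⟨div_nonneg hc.le hfz, div_le_one_of_le₀ (hcf z hz) hfz⟩
  have hblock : IsLinearGameValueOn I ((fun z => c / f z) * (f - fun _ => c)) :=
    (h.sub (isLinearGameValueOn_const I c)).fromBlocks (isLinearGameValueOn_const I c) hθ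
      fun z hz => by simp only [Pi.sub_apply]; field_simp [hf₀ z hz]
  refine (((isLinearGameValueOn_const I c).sub hblock).smul (c ^ 2)⁻¹).congr fun z hz => ?_
  simp only [Pi.smul_apply, Pi.sub_apply, Pi.mul_apply, Pi.inv_apply, smul_eq_mul]
  field_simp [hf₀ z hz]
  ring

lemma mul_add_one (h : IsLinearGameValueOn I f) {M : ℝ} (h₁ : ∀ z ∈ I, 1 ≤ f z)
    (hM : ∀ z ∈ I, f z ≤ M) : IsLinearGameValueOn I fun z => f z * (f z + 1) := by
  have hf₀ : ∀ z ∈ I, 0 < f z := fun z hz => one_pos.trans_le (h₁ z hz)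
  set M' := M ⊔ 1
  have hM' : 1 ≤ M' := le_sup_right
  -- `f (f + 1) = (f⁻¹ - (f + 1)⁻¹)⁻¹`, and `f⁻¹ - (f + 1)⁻¹ ≥ (M' (M' + 1))⁻¹ > 0`
  have hdiff : ∀ z ∈ I, (f⁻¹ - (f + 1)⁻¹) z = (f z * (f z + 1))⁻¹ := fun z hz => by
    have := hf₀ z hz
    simp only [Pi.sub_apply, Pi.inv_apply, Pi.add_apply, Pi.one_apply]
    field_simp
    ring
  have hd : IsLinearGameValueOn I (f⁻¹ - (f + 1)⁻¹) :=
    (h.inv_of_le one_pos h₁).sub ((h.add (isLinearGameValueOn_const I 1)).inv_of_le one_pos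
      fun z hz => by simp only [Pi.add_apply]; linarith [h₁ z hz])
  refine (hd.inv_of_le (c := (M' * (M' + 1))⁻¹)
    (inv_pos.2 (mul_pos (by linarith) (by linarith))) fun z hz => ?_).congr
    fun z hz => by rw [Pi.inv_apply, hdiff z hz, inv_inv]
  have hfM : f z ≤ M' := (hM z hz).trans le_sup_left
  rw [hdiff z hz]
  have := hf₀ z hz
  gcongr

lemma mul_self (h : IsLinearGameValueOn I f) (hb : IsBounded (f '' I)) :
    IsLinearGameValueOn I (f * f) := by
  obtain ⟨K, -, hK⟩ := hb.exists_pos_norm_le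
  have hfK : ∀ z ∈ I, |f z| ≤ K := fun z hz => hK _ (mem_image_of_mem f hz)
  -- shift `f` into `[1, 2K + 1]`
  have ht := (h.add (isLinearGameValueOn_const I (K + 1))).mul_add_one (M := 2 * K + 1)
    (fun z hz => by simp only [Pi.add_apply]; linarith [neg_abs_le (f z), hfK z hz])
    (fun z hz => by simp only [Pi.add_apply]; linarith [le_abs_self (f z), hfK z hz])
  refine ((ht.sub (h.smul (2 * K + 3))).sub
    (isLinearGameValueOn_const I ((K + 1) * (K + 2)))).congr fun z _ => ?_
  simp only [Pi.sub_apply, Pi.add_apply, Pi.smul_apply, Pi.mul_apply, smul_eq_mul]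
  ring

lemma mul (hf : IsLinearGameValueOn I f) (hg : IsLinearGameValueOn I g)
    (hfb : IsBounded (f '' I)) (hgb : IsBounded (g '' I)) : IsLinearGameValueOn I (f * g) := by
  have hfgb : IsBounded ((f + g) '' I) := (hfb.add hgb).subset <|
    image_subset_iff.2 fun z hz => add_mem_add (mem_image_of_mem f hz) (mem_image_of_mem g hz)
  refine ((((hf.add hg).mul_self hfgb).sub (hf.mul_self hfb)).sub (hg.mul_self hgb)).smul 2⁻¹
    |>.congr fun z _ => ?_
  simp only [Pi.smul_apply, Pi.sub_apply, Pi.add_apply, Pi.mul_apply, smul_eq_mul]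
  ring

end IsLinearGameValueOn

lemma isBounded_image_eval {I : Set ℝ} (hI : IsBounded I) (P : ℝ[X]) :
    IsBounded ((fun z => P.eval z) '' I) :=
  (hI.isCompact_closure.image P.continuous).isBounded.subset (image_mono subset_closure)

lemma isLinearGameValueOn_eval {I : Set ℝ} (hI : IsBounded I) (P : ℝ[X]) :
    IsLinearGameValueOn I fun z => P.eval z := by
  induction P using Polynomial.induction_on with
  | C a => simpa using isLinearGameValueOn_const I a
  | add p q hp hq => exact (hp.add hq).congr fun z _ => (eval_add ..).symm
  | monomial n a h =>
    refine (h.mul (isLinearGameValueOn_id I) (isBounded_image_eval hI _) (by simpa using hI)).congr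
      fun z _ => ?_
    simp [pow_succ, mul_assoc]

lemma AffineMap.apply_eq_linear_one_mul_add (f : ℝ →ᵃ[ℝ] ℝ) (z : ℝ) :
    f z = f.linear 1 * z + f 0 := by
  rw [congrFun f.decomp z, Pi.add_apply, mul_comm, ← smul_eq_mul, ← f.linear.map_smul,
    smul_eq_mul, mul_one]

lemma IsLinearGameValueOn.exists_polynomial_game {I : Set ℝ} {f : ℝ → ℝ}
    (h : IsLinearGameValueOn I f) :
    ∃ (A B : Type) (iA : Fintype A) (iB : Fintype B), Nonempty A ∧ Nonempty B ∧
      ∃ G : A → B → ℝ[X], (∀ a b, (G a b).degree ≤ 1) ∧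
        ∀ z ∈ I, (@matrixValue A B iA iB fun a b => (G a b).eval z) = f z := by
  obtain ⟨A, B, _, _, hA, hB, G, hG⟩ := h
  refine ⟨A, B, inferInstance, inferInstance, hA, hB,
    fun a b => C ((G a b).linear 1) * X + C (G a b 0), fun _ _ => degree_linear_le, fun z hz => ?_⟩
  simp only [eval_add, eval_mul, eval_C, eval_X, ← AffineMap.apply_eq_linear_one_mul_add]
  exact (hG z hz).matrixValue_eq

theorem rational_truncation_is_linear_game_value_on_interval_general
    (α β : ℝ) (Q R : Polynomial ℝ) (ε : ℝ) (hε : 0 < ε) :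
    ∃ (A B : Type) (iA : Fintype A) (iB : Fintype B), Nonempty A ∧ Nonempty B ∧
      ∃ G : A → B → Polynomial ℝ, (∀ a b, (G a b).degree ≤ 1) ∧
        ∀ z ∈ Set.Icc α β, (@matrixValue A B iA iB fun a b => (G a b).eval z) =
          Q.eval z / max (R.eval z) ε := by
  have hI := Metric.isBounded_Icc α β
  set D : ℝ → ℝ := fun z => max (R.eval z) ε
  have hεD : ∀ z, ε ≤ D z := fun z => le_max_right _ _
  have hD : IsLinearGameValueOn (Icc α β) D :=
    (isLinearGameValueOn_eval hI R).max (isLinearGameValueOn_const _ ε)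
  have hDinv : IsBounded (D⁻¹ '' Icc α β) := (Metric.isBounded_Icc 0 ε⁻¹).subset <|
    image_subset_iff.2 fun z _ => ⟨inv_nonneg.2 (hε.le.trans (hεD z)), inv_anti₀ hε (hεD z)⟩
  have hQD : IsLinearGameValueOn (Icc α β) fun z => Q.eval z / D z :=
    ((isLinearGameValueOn_eval hI Q).mul (hD.inv_of_le hε fun z _ => hεD z)
      (isBounded_image_eval hI Q) hDinv).congr fun z _ => (div_eq_mul_inv _ _).symm
  exact hQD.exists_polynomial_game

/-- For every compact interval `I = [α, β]` with `α < β`, polynomials `Q`, `R`, and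
`ε > 0`, there is a linear game whose value function agrees with
`z ↦ Q z / max (R z) ε` on `I`. -/
theorem rational_truncation_is_linear_game_value_on_interval
    (α β : ℝ) (hαβ : α < β) (Q R : Polynomial ℝ) (ε : ℝ) (hε : 0 < ε) :
    ∃ (A B : Type) (iA : Fintype A) (iB : Fintype B), Nonempty A ∧ Nonempty B ∧
      ∃ G : A → B → Polynomial ℝ, (∀ a b, (G a b).degree ≤ 1) ∧
        ∀ z ∈ Set.Icc α β, (@matrixValue A B iA iB fun a b => (G a b).eval z) =
          Q.eval z / max (R.eval z) ε :=
  rational_truncation_is_linear_game_value_on_interval_general α β Q R ε hε
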